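/- arXiv:2008.09376 — 2 statements merged into one kernel-verified Lean document; each statement's English description precedes it below -/
import Mathlib

section
/- The function g(t) = (π/4)·(1−t)²·₂F₁(3/2, 3/2; 1; t) is monotonically nondecreasing on [0,1) and satisfies π/4 ≤ g(t) ≤ 1 for all t ∈ [0,1). -/
/-- The Gauss hypergeometric series `₂F₁(a,b;c;x) = Σ_k (a)_k (b)_k / ((c)_k k!) xᵏ`. -/
noncomputable def hyp2F1 (a b c x : ℝ) : ℝ :=
  ∑' k : ℕ, ((ascPochhammer ℝ k).eval a * (ascPochhammer ℝ k).eval b /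
    ((ascPochhammer ℝ k).eval c * (Nat.factorial k))) * x ^ k

/-!
With `w_k = C(2k, k) / 4^k`, the coefficients of `₂F₁(3/2, 3/2; 1; t)` are
`a_k = ((2k+1) w_k)²`. Multiplying by `(1 - t)²` replaces them by the second differences
`b_k = Δ²a_k = (w_k / (2k-1))²`, which are nonnegative. Hence
`(1 - t)² ₂F₁(3/2, 3/2; 1; t) = Σ b_k t^k` is nondecreasing on `[0, 1)`, at least `b_0 = 1`,
and at most `Σ b_k`. The partial sums of `b` telescope to
`Δa_n = (4n+1) w_n²`, and Wallis' product `(2n+1) w_n² → 2/π` gives `Σ b_k = 4/π`.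
-/

open Filter Topology Finset Real Nat

section BackDiff

variable {R : Type*} [AddCommGroup R]

/-- Backward difference, with the sequence extended by zero to negative indices. -/
def backDiff (a : ℕ → R) : ℕ → R
  | 0 => a 0
  | k + 1 => a (k + 1) - a k

theorem sum_range_succ_backDiff (a : ℕ → R) (n : ℕ) :
    ∑ k ∈ range (n + 1), backDiff a k = a n := by
  induction n with
  | zero => simp [backDiff]
  | succ n ih => rw [sum_range_succ, ih, backDiff, add_sub_cancel]

end BackDiff

theorem HasSum.backDiff_mul_pow {R : Type*} [CommRing R] [TopologicalSpace R]
    [IsTopologicalRing R] {a : ℕ → R} {t S : R} (h : HasSum (fun k => a k * t ^ k) S) :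
    HasSum (fun k => backDiff a k * t ^ k) ((1 - t) * S) := by
  rw [← hasSum_nat_add_iff' 1]
  convert ((hasSum_nat_add_iff' 1).mpr h).sub (h.mul_left t) using 1
  · ext n
    simp only [backDiff]
    ring
  · simp [backDiff]
    ring

noncomputable def centralBinomRatio (k : ℕ) : ℝ := k.centralBinom / 4 ^ k

theorem centralBinomRatio_zero : centralBinomRatio 0 = 1 := by simp [centralBinomRatio]

theorem centralBinomRatio_pos (k : ℕ) : 0 < centralBinomRatio k := by
  unfold centralBinomRatio
  have := k.centralBinom_pos
  positivity

theorem centralBinomRatio_le_one (k : ℕ) : centralBinomRatio k ≤ 1 := by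
  rw [centralBinomRatio, div_le_one (by positivity)]
  exact_mod_cast k.centralBinom_le_four_pow

theorem centralBinomRatio_succ (k : ℕ) :
    centralBinomRatio (k + 1) = centralBinomRatio k * (2 * k + 1) / (2 * k + 2) := by
  have h : ((k + 1 : ℕ) : ℝ) * (k + 1).centralBinom = 2 * (2 * k + 1) * k.centralBinom := by
    exact_mod_cast k.succ_mul_centralBinom_succ
  simp only [centralBinomRatio]
  push_cast at h
  field_simp
  linear_combination 2 * 4 ^ k * h

theorem prod_range_wallis_eq (n : ℕ) :
    ∏ i ∈ range n, ((2 : ℝ) * i + 2) / (2 * i + 1) * ((2 * i + 2) / (2 * i + 3)) =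
      ((2 * n + 1) * centralBinomRatio n ^ 2)⁻¹ := by
  induction n with
  | zero => simp [centralBinomRatio_zero]
  | succ n ih =>
    rw [prod_range_succ, ih, centralBinomRatio_succ]
    have := centralBinomRatio_pos n
    push_cast
    field_simp
    ring

theorem tendsto_mul_centralBinomRatio_sq :
    Tendsto (fun n : ℕ => (2 * n + 1) * centralBinomRatio n ^ 2) atTop (𝓝 (2 / π)) := by
  have h := (tendsto_prod_pi_div_two.inv₀ (by positivity)).congr fun n => by
    rw [prod_range_wallis_eq, inv_inv]
  rwa [inv_div] at h

theorem tendsto_centralBinomRatio_sq :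
    Tendsto (fun n : ℕ => centralBinomRatio n ^ 2) atTop (𝓝 0) := by
  have hinv : Tendsto (fun n : ℕ => (2 * (n : ℝ) + 1)⁻¹) atTop (𝓝 0) :=
    tendsto_inv_atTop_zero.comp <| tendsto_atTop_add_const_right _ 1 <|
      tendsto_natCast_atTop_atTop.const_mul_atTop two_pos
  refine (mul_zero (2 / π) ▸ tendsto_mul_centralBinomRatio_sq.mul hinv).congr fun n => ?_
  field_simp

noncomputable def threeHalvesCoeff (k : ℕ) : ℝ := ((2 * k + 1) * centralBinomRatio k) ^ 2

theorem ascPochhammer_eval_three_halves (k : ℕ) :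
    (ascPochhammer ℝ k).eval (3 / 2) = (2 * k + 1) * centralBinomRatio k * k ! := by
  induction k with
  | zero => simp [centralBinomRatio_zero]
  | succ k ih =>
    rw [ascPochhammer_succ_eval, ih, centralBinomRatio_succ, Nat.factorial_succ]
    push_cast
    field_simp
    ring

theorem hyp2F1_three_halves (t : ℝ) :
    hyp2F1 (3 / 2) (3 / 2) 1 t = ∑' k, threeHalvesCoeff k * t ^ k := by
  refine tsum_congr fun k => ?_
  rw [ascPochhammer_eval_one, ascPochhammer_eval_three_halves, threeHalvesCoeff]
  have := k.factorial_pos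
  field_simp

theorem threeHalvesCoeff_le (k : ℕ) : threeHalvesCoeff k ≤ 9 * k ^ 2 + 1 := by
  have hw : centralBinomRatio k ^ 2 ≤ 1 :=
    pow_le_one₀ (centralBinomRatio_pos k).le (centralBinomRatio_le_one k)
  have hk : (k : ℝ) ≤ k ^ 2 := by exact_mod_cast Nat.le_self_pow two_ne_zero k
  calc threeHalvesCoeff k ≤ (2 * k + 1) ^ 2 := by
        rw [threeHalvesCoeff, mul_pow]
        exact mul_le_of_le_one_right (sq_nonneg _) hw
    _ ≤ 9 * k ^ 2 + 1 := by nlinarith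

theorem summable_threeHalvesCoeff_mul_pow {t : ℝ} (h0 : 0 ≤ t) (h1 : t < 1) :
    Summable fun k => threeHalvesCoeff k * t ^ k := by
  have hnorm : ‖t‖ < 1 := by rwa [Real.norm_eq_abs, abs_of_nonneg h0]
  have hmajor : Summable fun k : ℕ => 9 * ((k : ℝ) ^ 2 * t ^ k) + t ^ k :=
    ((summable_pow_mul_geometric_of_norm_lt_one 2 hnorm).mul_left 9).add
      (summable_geometric_of_lt_one h0 h1)
  refine hmajor.of_nonneg_of_le (fun k => by unfold threeHalvesCoeff; positivity) fun k => ?_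
  calc threeHalvesCoeff k * t ^ k ≤ (9 * k ^ 2 + 1) * t ^ k :=
        mul_le_mul_of_nonneg_right (threeHalvesCoeff_le k) (pow_nonneg h0 k)
    _ = 9 * (k ^ 2 * t ^ k) + t ^ k := by ring

theorem backDiff_threeHalvesCoeff (n : ℕ) :
    backDiff threeHalvesCoeff n = (4 * n + 1) * centralBinomRatio n ^ 2 := by
  cases n with
  | zero => simp [backDiff, threeHalvesCoeff, centralBinomRatio_zero]
  | succ n =>
    simp only [backDiff, threeHalvesCoeff, centralBinomRatio_succ]
    push_cast
    field_simp
    ring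

theorem backDiff_backDiff_threeHalvesCoeff (k : ℕ) :
    backDiff (backDiff threeHalvesCoeff) k = (centralBinomRatio k / (2 * k - 1)) ^ 2 := by
  match k with
  | 0 => simp [backDiff, threeHalvesCoeff, centralBinomRatio_zero]
  | 1 =>
    norm_num [backDiff, threeHalvesCoeff, centralBinomRatio_succ, centralBinomRatio_zero]
  | k + 2 =>
    have : (2 * ((k + 2 : ℕ) : ℝ) - 1) ≠ 0 := by
      push_cast
      linarith [(k.cast_nonneg : (0 : ℝ) ≤ k)]
    simp only [backDiff, threeHalvesCoeff, centralBinomRatio_succ]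
    field_simp
    push_cast
    ring

theorem backDiff_backDiff_threeHalvesCoeff_nonneg (k : ℕ) :
    0 ≤ backDiff (backDiff threeHalvesCoeff) k :=
  backDiff_backDiff_threeHalvesCoeff k ▸ sq_nonneg _

theorem hasSum_backDiff_backDiff_threeHalvesCoeff :
    HasSum (backDiff (backDiff threeHalvesCoeff)) (4 / π) := by
  rw [hasSum_iff_tendsto_nat_of_nonneg backDiff_backDiff_threeHalvesCoeff_nonneg,
    ← tendsto_add_atTop_iff_nat 1]
  simp only [sum_range_succ_backDiff, backDiff_threeHalvesCoeff]
  convert (tendsto_mul_centralBinomRatio_sq.const_mul 2).sub tendsto_centralBinomRatio_sq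
    using 2 <;> ring

theorem hasSum_one_sub_sq_mul_hyp2F1 {t : ℝ} (h0 : 0 ≤ t) (h1 : t < 1) :
    HasSum (fun k => backDiff (backDiff threeHalvesCoeff) k * t ^ k)
      ((1 - t) ^ 2 * hyp2F1 (3 / 2) (3 / 2) 1 t) := by
  rw [sq, mul_assoc, hyp2F1_three_halves]
  exact (summable_threeHalvesCoeff_mul_pow h0 h1).hasSum.backDiff_mul_pow.backDiff_mul_pow

theorem monotoneOn_one_sub_sq_mul_hyp2F1 :
    MonotoneOn (fun t => (1 - t) ^ 2 * hyp2F1 (3 / 2) (3 / 2) 1 t) (Set.Ico 0 1) := by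
  intro s hs t ht hst
  refine hasSum_le (fun k => ?_) (hasSum_one_sub_sq_mul_hyp2F1 hs.1 hs.2)
    (hasSum_one_sub_sq_mul_hyp2F1 ht.1 ht.2)
  exact mul_le_mul_of_nonneg_left (pow_le_pow_left₀ hs.1 hst k)
    (backDiff_backDiff_threeHalvesCoeff_nonneg k)

theorem one_le_one_sub_sq_mul_hyp2F1 {t : ℝ} (h0 : 0 ≤ t) (h1 : t < 1) :
    1 ≤ (1 - t) ^ 2 * hyp2F1 (3 / 2) (3 / 2) 1 t := by
  simpa [backDiff, threeHalvesCoeff, centralBinomRatio_zero] using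
    le_hasSum (hasSum_one_sub_sq_mul_hyp2F1 h0 h1) 0 fun k _ =>
      mul_nonneg (backDiff_backDiff_threeHalvesCoeff_nonneg k) (pow_nonneg h0 k)

theorem one_sub_sq_mul_hyp2F1_le {t : ℝ} (h0 : 0 ≤ t) (h1 : t < 1) :
    (1 - t) ^ 2 * hyp2F1 (3 / 2) (3 / 2) 1 t ≤ 4 / π := by
  refine hasSum_le (fun k => ?_) (hasSum_one_sub_sq_mul_hyp2F1 h0 h1)
    hasSum_backDiff_backDiff_threeHalvesCoeff
  exact mul_le_of_le_one_right (backDiff_backDiff_threeHalvesCoeff_nonneg k)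
    (pow_le_one₀ h0 h1.le)

/-- **`g(t) = (π/4)(1−t)² ₂F₁(3/2,3/2;1;t)` is nondecreasing on `[0,1)` with
`π/4 ≤ g(t) ≤ 1`.** -/
theorem monotone_and_bounds_g :
    MonotoneOn (fun t : ℝ => Real.pi / 4 * (1 - t) ^ 2 * hyp2F1 (3 / 2) (3 / 2) 1 t)
      (Set.Ico (0 : ℝ) 1) ∧
    ∀ t ∈ Set.Ico (0 : ℝ) 1,
      Real.pi / 4 ≤ Real.pi / 4 * (1 - t) ^ 2 * hyp2F1 (3 / 2) (3 / 2) 1 t ∧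
      Real.pi / 4 * (1 - t) ^ 2 * hyp2F1 (3 / 2) (3 / 2) 1 t ≤ 1 := by
  have hpi : 0 < π / 4 := by positivity
  simp only [mul_assoc]
  refine ⟨fun s hs t ht hst => ?_, fun t ht => ⟨?_, ?_⟩⟩
  · exact mul_le_mul_of_nonneg_left (monotoneOn_one_sub_sq_mul_hyp2F1 hs ht hst) hpi.le
  · exact le_mul_of_one_le_right hpi.le (one_le_one_sub_sq_mul_hyp2F1 ht.1 ht.2)
  · calc π / 4 * ((1 - t) ^ 2 * hyp2F1 (3 / 2) (3 / 2) 1 t) ≤ π / 4 * (4 / π) :=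
          mul_le_mul_of_nonneg_left (one_sub_sq_mul_hyp2F1_le ht.1 ht.2) hpi.le
      _ = 1 := by field_simp
end

section
/- Let a_b ∈ ℂ^M and a_r ∈ ℂ^N have unit-modulus entries, let h_d ∈ ℂ^M with a_b^H h_d ≠ 0, let h_ru ∈ ℂ^N, and let β_br > 0. Then the maximum over phase vectors φ ∈ ℝ^N of ‖h_d + √β_br · a_b · (a_r^H · Diag(e^{jφ₁}, …, e^{jφ_N}) · h_ru)‖₂² equals ‖h_d‖₂² + 2·√β_br·|a_b^H h_d|·Σ_{n=1}^N |h_ru,n| + β_br·M·(Σ_{n=1}^N |h_ru,n|)², and it is attained at the RIS phase matrix Φ = (a_b^H h_d / |a_b^H h_d|)·Diag(e^{j∠a_r})·Diag(e^{−j∠h_ru}). -/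
/-!
Write the channel as `h_d + w a_b` with `w = √β_br · z` and `z = a_rᴴ Φ h_ru`. Since the entries of
`a_b` have unit modulus, `‖h_d + w a_b‖² = ‖h_d‖² + M‖w‖² + 2 Re(w̄ · a_bᴴ h_d)`, which is at most
`‖h_d‖² + M‖w‖² + 2‖w‖ |a_bᴴ h_d|` and increasing in `‖w‖`. The triangle inequality bounds `‖z‖` by
`Σ_n |h_ru,n|`, and the proposed `Φ` attains this bound with `w` aligned to `a_bᴴ h_d`, so both
inequalities become equalities.
-/

open Complex ComplexConjugate

namespace Complex

theorem exp_arg_mul_I_of_norm_eq_one {z : ℂ} (hz : ‖z‖ = 1) : exp (arg z * I) = z := by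
  simpa [hz] using norm_mul_exp_arg_mul_I z

theorem exp_neg_arg_mul_I_mul_self (z : ℂ) : exp (-(arg z : ℂ) * I) * z = ‖z‖ := by
  calc exp (-(arg z : ℂ) * I) * z = exp (-(arg z : ℂ) * I) * (‖z‖ * exp (arg z * I)) := by
        rw [norm_mul_exp_arg_mul_I]
    _ = ‖z‖ * exp (-(arg z : ℂ) * I + arg z * I) := by rw [exp_add]; ring
    _ = ‖z‖ := by rw [neg_mul, neg_add_cancel, exp_zero, mul_one]

theorem norm_div_norm_self {c : ℂ} (hc : c ≠ 0) : ‖c / (‖c‖ : ℂ)‖ = 1 := by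
  rw [norm_div, norm_real, norm_norm, div_self (norm_ne_zero_iff.mpr hc)]

theorem norm_add_mul_sq_of_norm_eq_one {a : ℂ} (ha : ‖a‖ = 1) (h w : ℂ) :
    ‖h + w * a‖ ^ 2 = ‖h‖ ^ 2 + ‖w‖ ^ 2 + 2 * (conj w * (conj a * h)).re := by
  have hconj : h * conj (w * a) = conj w * (conj a * h) := by rw [map_mul]; ring
  simp only [Complex.sq_norm, normSq_add, normSq_mul, ← Complex.sq_norm a, ha, hconj]
  ring

end Complex

section UnitModulus

variable {ι : Type*} [Fintype ι] {a : ι → ℂ}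

theorem sum_norm_add_mul_sq (ha : ∀ i, ‖a i‖ = 1) (h : ι → ℂ) (w : ℂ) :
    ∑ i, ‖h i + w * a i‖ ^ 2
      = ∑ i, ‖h i‖ ^ 2 + Fintype.card ι * ‖w‖ ^ 2
        + 2 * (conj w * ∑ i, conj (a i) * h i).re := by
  simp only [norm_add_mul_sq_of_norm_eq_one (ha _), Finset.sum_add_distrib, Finset.mul_sum,
    re_sum, Finset.sum_const, Finset.card_univ, nsmul_eq_mul]

theorem sum_norm_add_mul_sq_le (ha : ∀ i, ‖a i‖ = 1) (h : ι → ℂ) {w : ℂ} {r : ℝ}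
    (hw : ‖w‖ ≤ r) :
    ∑ i, ‖h i + w * a i‖ ^ 2
      ≤ ∑ i, ‖h i‖ ^ 2 + 2 * ‖∑ i, conj (a i) * h i‖ * r + Fintype.card ι * r ^ 2 := by
  set c := ∑ i, conj (a i) * h i
  have hre : (conj w * c).re ≤ ‖c‖ * r := calc
    (conj w * c).re ≤ ‖conj w * c‖ := re_le_norm _
    _ = ‖w‖ * ‖c‖ := by rw [norm_mul, RCLike.norm_conj]
    _ ≤ ‖c‖ * r := by rw [mul_comm]; gcongr
  have hsq : ‖w‖ ^ 2 ≤ r ^ 2 := pow_le_pow_left₀ (norm_nonneg w) hw 2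
  rw [sum_norm_add_mul_sq ha]
  nlinarith [Nat.cast_nonneg (α := ℝ) (Fintype.card ι)]

theorem sum_norm_add_mul_sq_of_aligned (ha : ∀ i, ‖a i‖ = 1) (h : ι → ℂ) {r : ℝ} (hr : 0 ≤ r)
    (hc : ∑ i, conj (a i) * h i ≠ 0) :
    ∑ i, ‖h i + r * ((∑ j, conj (a j) * h j) / ‖∑ j, conj (a j) * h j‖) * a i‖ ^ 2
      = ∑ i, ‖h i‖ ^ 2 + 2 * ‖∑ i, conj (a i) * h i‖ * r + Fintype.card ι * r ^ 2 := by
  set c := ∑ i, conj (a i) * h i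
  have hnorm : ‖(r : ℂ) * (c / ‖c‖)‖ = r := by
    rw [norm_mul, norm_div_norm_self hc, norm_real, Real.norm_of_nonneg hr, mul_one]
  have hinner : conj ((r : ℂ) * (c / ‖c‖)) * c = (‖c‖ * r : ℝ) := by
    rw [map_mul, map_div₀, conj_ofReal, conj_ofReal, mul_assoc, div_mul_eq_mul_div, conj_mul']
    field_simp
    push_cast
    ring
  rw [sum_norm_add_mul_sq ha, hnorm, hinner, ofReal_re]
  ring

theorem norm_sum_conj_mul_exp_mul_le (ha : ∀ n, ‖a n‖ = 1) (g : ι → ℂ) (φ : ι → ℝ) :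
    ‖∑ n, conj (a n) * exp (φ n * I) * g n‖ ≤ ∑ n, ‖g n‖ :=
  (norm_sum_le _ _).trans_eq <| Finset.sum_congr rfl fun n _ => by
    rw [norm_mul, norm_mul, RCLike.norm_conj, ha, norm_exp_ofReal_mul_I, one_mul, one_mul]

theorem sum_conj_mul_aligned_phase_mul (ha : ∀ n, ‖a n‖ = 1) (g : ι → ℂ) (ψ : ℂ) :
    ∑ n, conj (a n) * (ψ * exp (arg (a n) * I) * exp (-(arg (g n) : ℂ) * I)) * g n
      = ψ * ∑ n, (‖g n‖ : ℂ) := by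
  rw [Finset.mul_sum]
  refine Finset.sum_congr rfl fun n _ => ?_
  rw [exp_arg_mul_I_of_norm_eq_one (ha n)]
  calc conj (a n) * (ψ * a n * exp (-(arg (g n) : ℂ) * I)) * g n
      = ψ * (conj (a n) * a n) * (exp (-(arg (g n) : ℂ) * I) * g n) := by ring
    _ = ψ * ‖g n‖ := by rw [conj_mul', ha, exp_neg_arg_mul_I_mul_self, ofReal_one, one_pow, mul_one]

end UnitModulus

theorem optimal_ris_phases_general
    (M N : ℕ) (βbr : ℝ) (hβbr : 0 < βbr)
    (ab : Fin M → ℂ) (hab : ∀ i, ‖ab i‖ = 1)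
    (ar : Fin N → ℂ) (har : ∀ n, ‖ar n‖ = 1)
    (hd : Fin M → ℂ) (hru : Fin N → ℂ)
    (hne : (∑ i, (starRingEnd ℂ) (ab i) * hd i) ≠ 0) :
    -- the squared channel norm as a function of the RIS phases φ
    let f : (Fin N → ℝ) → ℝ := fun φ =>
      ∑ i, ‖hd i + (Real.sqrt βbr : ℂ) * ab i *
        (∑ n, (starRingEnd ℂ) (ar n) * Complex.exp ((φ n : ℂ) * Complex.I) * hru n)‖ ^ 2
    -- the optimal value
    let optval : ℝ := (∑ i, ‖hd i‖ ^ 2)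
      + 2 * Real.sqrt βbr * ‖∑ i, (starRingEnd ℂ) (ab i) * hd i‖ * (∑ n, ‖hru n‖)
      + βbr * M * (∑ n, ‖hru n‖) ^ 2
    -- ψ = a_b^H h_d / |a_b^H h_d|
    let ψ : ℂ := (∑ i, (starRingEnd ℂ) (ab i) * hd i) /
      ((‖∑ i, (starRingEnd ℂ) (ab i) * hd i‖ : ℝ) : ℂ)
    -- the diagonal entries of the optimal Φ = ψ Diag(e^{j∠a_r}) Diag(e^{−j∠h_ru})
    let Φdiag : Fin N → ℂ := fun n =>
      ψ * Complex.exp (((arg (ar n) : ℝ) : ℂ) * Complex.I) *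
        Complex.exp (-(((arg (hru n) : ℝ) : ℂ)) * Complex.I)
    -- the maximum of f is optval …
    IsGreatest (Set.range f) optval ∧
    -- … and it is attained at the RIS phase matrix Φ
    (∑ i, ‖hd i + (Real.sqrt βbr : ℂ) * ab i *
        (∑ n, (starRingEnd ℂ) (ar n) * Φdiag n * hru n)‖ ^ 2) = optval := by
  intro f optval ψ Φdiag
  have hoptval : optval = ∑ i, ‖hd i‖ ^ 2 + 2 * ‖∑ i, conj (ab i) * hd i‖ * (√βbr * ∑ n, ‖hru n‖)
      + Fintype.card (Fin M) * (√βbr * ∑ n, ‖hru n‖) ^ 2 := by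
    rw [Fintype.card_fin, mul_pow, Real.sq_sqrt hβbr.le]
    ring
  have hattained : ∑ i, ‖hd i + (√βbr : ℂ) * ab i *
      (∑ n, conj (ar n) * Φdiag n * hru n)‖ ^ 2 = optval := by
    rw [hoptval, ← sum_norm_add_mul_sq_of_aligned hab hd (by positivity) hne]
    simp only [Φdiag, sum_conj_mul_aligned_phase_mul har, ψ]
    push_cast
    refine Finset.sum_congr rfl fun i _ => ?_
    ring_nf
  have hΦ : ∀ n, ‖Φdiag n‖ = 1 := fun n => by
    simp only [Φdiag, ψ, norm_mul, norm_div_norm_self hne, ← ofReal_neg, norm_exp_ofReal_mul_I,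
      mul_one]
  refine ⟨⟨⟨fun n => arg (Φdiag n), ?_⟩, ?_⟩, hattained⟩
  · simpa only [f, exp_arg_mul_I_of_norm_eq_one (hΦ _)] using hattained
  · rintro _ ⟨φ, rfl⟩
    rw [hoptval]
    simp only [f, mul_right_comm _ (ab _)]
    refine sum_norm_add_mul_sq_le hab hd ?_
    rw [norm_mul, norm_real, Real.norm_of_nonneg (Real.sqrt_nonneg _)]
    exact mul_le_mul_of_nonneg_left (norm_sum_conj_mul_exp_mul_le har hru φ) (Real.sqrt_nonneg _)

/-- **Optimal RIS phases:** the maximum over phase vectors `φ ∈ ℝ^N` of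
`‖h_d + √β_br a_b (a_r^H Diag(e^{jφ}) h_ru)‖₂²` is
`‖h_d‖² + 2√β_br |a_b^H h_d| Σ_n |h_ru,n| + β_br M (Σ_n |h_ru,n|)²`, attained at
`Φ = (a_b^H h_d/|a_b^H h_d|) Diag(e^{j∠a_r}) Diag(e^{−j∠h_ru})`. -/
theorem optimal_ris_phases
    (M N : ℕ) (hM : 1 ≤ M) (hN : 1 ≤ N) (βbr : ℝ) (hβbr : 0 < βbr)
    (ab : Fin M → ℂ) (hab : ∀ i, ‖ab i‖ = 1)
    (ar : Fin N → ℂ) (har : ∀ n, ‖ar n‖ = 1)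
    (hd : Fin M → ℂ) (hru : Fin N → ℂ)
    (hne : (∑ i, (starRingEnd ℂ) (ab i) * hd i) ≠ 0) :
    -- the squared channel norm as a function of the RIS phases φ
    let f : (Fin N → ℝ) → ℝ := fun φ =>
      ∑ i, ‖hd i + (Real.sqrt βbr : ℂ) * ab i *
        (∑ n, (starRingEnd ℂ) (ar n) * Complex.exp ((φ n : ℂ) * Complex.I) * hru n)‖ ^ 2
    -- the optimal value
    let optval : ℝ := (∑ i, ‖hd i‖ ^ 2)
      + 2 * Real.sqrt βbr * ‖∑ i, (starRingEnd ℂ) (ab i) * hd i‖ * (∑ n, ‖hru n‖)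
      + βbr * M * (∑ n, ‖hru n‖) ^ 2
    -- ψ = a_b^H h_d / |a_b^H h_d|
    let ψ : ℂ := (∑ i, (starRingEnd ℂ) (ab i) * hd i) /
      ((‖∑ i, (starRingEnd ℂ) (ab i) * hd i‖ : ℝ) : ℂ)
    -- the diagonal entries of the optimal Φ = ψ Diag(e^{j∠a_r}) Diag(e^{−j∠h_ru})
    let Φdiag : Fin N → ℂ := fun n =>
      ψ * Complex.exp (((arg (ar n) : ℝ) : ℂ) * Complex.I) *
        Complex.exp (-(((arg (hru n) : ℝ) : ℂ)) * Complex.I)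
    -- the maximum of f is optval …
    IsGreatest (Set.range f) optval ∧
    -- … and it is attained at the RIS phase matrix Φ
    (∑ i, ‖hd i + (Real.sqrt βbr : ℂ) * ab i *
        (∑ n, (starRingEnd ℂ) (ar n) * Φdiag n * hru n)‖ ^ 2) = optval :=
  optimal_ris_phases_general M N βbr hβbr ab hab ar har hd hru hne
end
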